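/- arXiv:1411.6834 — 2 statements merged into one kernel-verified Lean document; each statement's English description precedes it below -/
import Mathlib

section
/- Let σ ∈ ℝ with σ ≥ -√2, and set b = (2/3)(√(σ² + 6) + σ/2). Then b > σ, and the function f(x) = (1/(2π))√((b-x)/(x-σ))·(2x + b - σ) is a probability density on [σ, b]: it is nonnegative on (σ, b) and ∫_σ^b f(x) dx = 1. -/
/-!
On `(a, b)` the function `√((b - x)/(x - a)) (2x + b - a)` has the elementary antiderivative
`(x + (a + b)/2) √((b - x)(x - a)) + (b - a)(3b + a)/4 · arcsin ((2x - a - b)/(b - a))`, so its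
integral over `[a, b]` is `π (b - a)(3b + a)/4`. The endpoint `b` is the positive root of
`(b - σ)(3b + σ) = 8`, which makes the total mass `1`. Nonnegativity of the density reduces to
`σ + b ≥ 0`, that is, to `σ² ≤ 2` when `σ < 0`.
-/

open MeasureTheory Real Set

section
variable {a b x : ℝ}

lemma sqrt_sub_div_sub_eq (hx : x ∈ Ioo a b) :
    √((b - x) / (x - a)) = (b - x) / √((b - x) * (x - a)) := by
  have hxa : 0 < x - a := sub_pos.2 hx.1
  have hbx : 0 < b - x := sub_pos.2 hx.2
  rw [← Real.sqrt_sq hbx.le, ← Real.sqrt_div' _ (by positivity), Real.sqrt_sq hbx.le]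
  congr 1
  field_simp

lemma hasDerivAt_sqrt_sub_mul_sub (hx : x ∈ Ioo a b) :
    HasDerivAt (fun y => √((b - y) * (y - a)))
      ((a + b - 2 * x) / (2 * √((b - x) * (x - a)))) x := by
  have hpos : 0 < (b - x) * (x - a) := mul_pos (sub_pos.2 hx.2) (sub_pos.2 hx.1)
  have hpoly : HasDerivAt (fun y => (b - y) * (y - a)) (a + b - 2 * x) x := by
    have := ((hasDerivAt_id' x).const_sub b).mul ((hasDerivAt_id' x).sub_const a)
    exact this.congr_deriv (by ring)
  exact hpoly.sqrt hpos.ne'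

lemma hasDerivAt_arcsin_affine (hx : x ∈ Ioo a b) :
    HasDerivAt (fun y => arcsin ((2 * y - a - b) / (b - a)))
      (√((b - x) * (x - a)))⁻¹ x := by
  have hab : 0 < b - a := sub_pos.2 (hx.1.trans hx.2)
  have hpos : 0 < (b - x) * (x - a) := mul_pos (sub_pos.2 hx.2) (sub_pos.2 hx.1)
  have hu : |(2 * x - a - b) / (b - a)| < 1 := by
    rw [abs_div, abs_of_pos hab, div_lt_one hab, abs_lt]
    constructor <;> linarith [hx.1, hx.2]
  have hsq : √(1 - ((2 * x - a - b) / (b - a)) ^ 2) = 2 * √((b - x) * (x - a)) / (b - a) := by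
    rw [show 1 - ((2 * x - a - b) / (b - a)) ^ 2 = (2 / (b - a)) ^ 2 * ((b - x) * (x - a)) by
      field_simp; ring, Real.sqrt_mul (by positivity), Real.sqrt_sq (by positivity)]
    ring
  refine ((Real.hasDerivAt_arcsin (abs_lt.1 hu).1.ne' (abs_lt.1 hu).2.ne).comp x
    ((((hasDerivAt_id x).const_mul 2).sub_const a).sub_const b |>.div_const (b - a))).congr_deriv ?_
  rw [hsq]
  field_simp [(Real.sqrt_pos.2 hpos).ne']

lemma hasDerivAt_sqrt_sub_div_sub_antideriv (hx : x ∈ Ioo a b) :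
    HasDerivAt (fun y => √((b - y) * (y - a)) + (b - a) / 2 * arcsin ((2 * y - a - b) / (b - a)))
      (√((b - x) / (x - a))) x := by
  have hg : 0 < √((b - x) * (x - a)) := Real.sqrt_pos.2 (mul_pos (sub_pos.2 hx.2) (sub_pos.2 hx.1))
  refine ((hasDerivAt_sqrt_sub_mul_sub hx).add
    ((hasDerivAt_arcsin_affine hx).const_mul _)).congr_deriv ?_
  rw [sqrt_sub_div_sub_eq hx]
  field_simp
  ring

lemma hasDerivAt_sqrt_sub_div_sub_mul_antideriv (hx : x ∈ Ioo a b) :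
    HasDerivAt (fun y => (y + (a + b) / 2) * √((b - y) * (y - a))
        + (b - a) * (3 * b + a) / 4 * arcsin ((2 * y - a - b) / (b - a)))
      (√((b - x) / (x - a)) * (2 * x + b - a)) x := by
  have hpos : 0 < (b - x) * (x - a) := mul_pos (sub_pos.2 hx.2) (sub_pos.2 hx.1)
  have hg : 0 < √((b - x) * (x - a)) := Real.sqrt_pos.2 hpos
  have hg2 : √((b - x) * (x - a)) ^ 2 = (b - x) * (x - a) := Real.sq_sqrt hpos.le
  refine ((((hasDerivAt_id' x).add_const _).mul (hasDerivAt_sqrt_sub_mul_sub hx)).add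
    ((hasDerivAt_arcsin_affine hx).const_mul _)).congr_deriv ?_
  rw [sqrt_sub_div_sub_eq hx]
  field_simp
  linear_combination 16 * hg2

lemma intervalIntegrable_sqrt_sub_div_sub (hab : a ≤ b) :
    IntervalIntegrable (fun x => √((b - x) / (x - a))) volume a b := by
  rw [intervalIntegrable_iff_integrableOn_Ioc_of_le hab]
  exact intervalIntegral.integrableOn_deriv_of_nonneg (by fun_prop)
    (fun x hx => hasDerivAt_sqrt_sub_div_sub_antideriv hx) (fun x _ => Real.sqrt_nonneg _)

theorem integral_sqrt_sub_div_sub_mul (hab : a < b) :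
    ∫ x in a..b, √((b - x) / (x - a)) * (2 * x + b - a) = π * (b - a) * (3 * b + a) / 4 := by
  rw [intervalIntegral.integral_eq_sub_of_hasDerivAt_of_le hab.le (by fun_prop)
    (fun x hx => hasDerivAt_sqrt_sub_div_sub_mul_antideriv hx)
    ((intervalIntegrable_sqrt_sub_div_sub hab.le).mul_continuousOn (by fun_prop))]
  have hb : (2 * b - a - b) / (b - a) = 1 := by rw [div_eq_one_iff_eq (sub_pos.2 hab).ne']; ring
  have ha : (2 * a - a - b) / (b - a) = -1 := by rw [div_eq_iff (sub_pos.2 hab).ne']; ring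
  simp only [hb, ha, arcsin_one, arcsin_neg_one, sub_self, zero_mul, mul_zero, Real.sqrt_zero]
  ring

end

section
variable {σ b : ℝ}

lemma halfRange_endpoint_sub_mul (hb : b = (2/3) * (√(σ^2 + 6) + σ/2)) :
    (b - σ) * (3 * b + σ) = 8 := by
  have hs : √(σ^2 + 6) ^ 2 = σ^2 + 6 := Real.sq_sqrt (by positivity)
  subst hb
  linear_combination (4/3) * hs

lemma halfRange_lt_endpoint (hb : b = (2/3) * (√(σ^2 + 6) + σ/2)) : σ < b := by
  have hs : |σ| < √(σ^2 + 6) := by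
    rw [← Real.sqrt_sq_eq_abs]
    exact Real.sqrt_lt_sqrt (sq_nonneg σ) (by linarith)
  rw [hb]
  linarith [le_abs_self σ]

lemma halfRange_add_endpoint_nonneg (hσ : -√2 ≤ σ) (hb : b = (2/3) * (√(σ^2 + 6) + σ/2)) :
    0 ≤ σ + b := by
  have hs : -2 * σ ≤ √(σ^2 + 6) := by
    rcases le_total 0 σ with hσ0 | hσ0
    · linarith [Real.sqrt_nonneg (σ^2 + 6)]
    · apply Real.le_sqrt_of_sq_le
      have : σ^2 ≤ 2 := by nlinarith [Real.sq_sqrt (show (0:ℝ) ≤ 2 by norm_num)]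
      linarith
  rw [hb]
  linarith

end

/-- For `σ ≥ -√2` and `b = (2/3)(√(σ²+6) + σ/2)`, one has `b > σ`
and `f(x) = (1/(2π))√((b-x)/(x-σ))(2x + b - σ)` is a probability density on
`[σ, b]`. -/
theorem halfRange_hermite_limit_density
    (σ b : ℝ) (hσ : -Real.sqrt 2 ≤ σ)
    (hb : b = (2/3) * (Real.sqrt (σ^2 + 6) + σ/2))
    (f : ℝ → ℝ)
    (hf : ∀ x, f x = (1/(2*π)) * Real.sqrt ((b - x)/(x - σ)) * (2*x + b - σ)) :
    σ < b ∧ (∀ x ∈ Set.Ioo σ b, 0 ≤ f x) ∧ (∫ x in σ..b, f x) = 1 := by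
  have hlt := halfRange_lt_endpoint hb
  refine ⟨hlt, fun x hx => ?_, ?_⟩
  · have : 0 ≤ 2 * x + b - σ := by linarith [hx.1, halfRange_add_endpoint_nonneg hσ hb]
    rw [hf]
    positivity
  · simp only [hf, mul_assoc, intervalIntegral.integral_const_mul, integral_sqrt_sub_div_sub_mul hlt]
    field_simp
    linear_combination halfRange_endpoint_sub_mul hb
end

section
/- For σ ≥ 0 and b = √(σ² + 2), the function f(x) = (|x|/π)·√((2 + σ² - x²)/(x² - σ²)) is a probability density on [-b, -σ] ∪ [σ, b]; in particular for σ = 0 it reduces to the semicircle law (1/π)√(2 - x²). -/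
open MeasureTheory Real Set

/-! The substitution `t = x² - σ² - 1` maps `[σ, √(σ² + 2)]` onto `[-1, 1]` and turns
`f x dx` into `√((1 - t)/(1 + t)) dt / (2π)`, whose primitive is `arcsin t + √(1 - t²)`;
this gives mass `1/2` to `[σ, √(σ² + 2)]`, and `f` is even. -/

theorem integral_Icc_neg_union_Icc_of_even {E : Type*} [NormedAddCommGroup E] [NormedSpace ℝ E]
    {f : ℝ → E} (heven : ∀ x, f (-x) = f x) {a b : ℝ} (ha : 0 ≤ a) (hab : a ≤ b)
    (hf : IntervalIntegrable f volume a b) :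
    ∫ x in Icc (-b) (-a) ∪ Icc a b, f x = (2 : ℝ) • ∫ x in a..b, f x := by
  have hf_neg : IntervalIntegrable f volume (-b) (-a) := by
    simpa only [heven] using ((IntervalIntegrable.iff_comp_neg (f := f)).mp hf).symm
  have hdisj : AEDisjoint volume (Icc (-b) (-a)) (Icc a b) := by
    refine measure_mono_null (fun x hx => ?_) (measure_singleton (0 : ℝ))
    exact le_antisymm (hx.1.2.trans (neg_nonpos.2 ha)) (ha.trans hx.2.1)
  rw [setIntegral_union₀ hdisj measurableSet_Icc.nullMeasurableSet
      ((intervalIntegrable_iff_integrableOn_Icc_of_le (by linarith)).mp hf_neg)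
      ((intervalIntegrable_iff_integrableOn_Icc_of_le hab).mp hf),
    integral_Icc_eq_integral_Ioc, integral_Icc_eq_integral_Ioc,
    ← intervalIntegral.integral_of_le (by linarith), ← intervalIntegral.integral_of_le hab,
    ← intervalIntegral.integral_comp_neg, two_smul]
  simp only [heven]

theorem hasDerivAt_arcsin_add_sqrt_one_sub_sq {t : ℝ} (h₁ : -1 < t) (h₂ : t < 1) :
    HasDerivAt (fun t => arcsin t + √(1 - t ^ 2)) (√((1 - t) / (1 + t))) t := by
  have hpos : 0 < 1 - t ^ 2 := by nlinarith
  refine ((hasDerivAt_arcsin h₁.ne' h₂.ne).add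
    (((hasDerivAt_pow 2 t).const_sub 1).sqrt hpos.ne')).congr_deriv ?_
  rw [sqrt_div' _ (by linarith : (0 : ℝ) ≤ 1 + t), show 1 - t ^ 2 = (1 - t) * (1 + t) by ring,
    sqrt_mul (by linarith)]
  have hA : 0 < √(1 - t) := sqrt_pos.2 (by linarith)
  have hB : 0 < √(1 + t) := sqrt_pos.2 (by linarith)
  field_simp
  norm_num
  nlinarith [sq_sqrt (by linarith : (0 : ℝ) ≤ 1 - t), sq_sqrt (by linarith : (0 : ℝ) ≤ 1 + t)]

noncomputable def truncatedHermiteDensity (σ x : ℝ) : ℝ :=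
  |x| / π * √((2 + σ ^ 2 - x ^ 2) / (x ^ 2 - σ ^ 2))

noncomputable def truncatedHermiteCDF (σ x : ℝ) : ℝ :=
  (arcsin (x ^ 2 - σ ^ 2 - 1) + √(1 - (x ^ 2 - σ ^ 2 - 1) ^ 2)) / (2 * π)

theorem truncatedHermiteDensity_nonneg (σ x : ℝ) : 0 ≤ truncatedHermiteDensity σ x := by
  unfold truncatedHermiteDensity
  positivity

theorem truncatedHermiteDensity_neg (σ x : ℝ) :
    truncatedHermiteDensity σ (-x) = truncatedHermiteDensity σ x := by
  simp [truncatedHermiteDensity]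

theorem truncatedHermiteDensity_zero {x : ℝ} (hx : x ≠ 0) :
    truncatedHermiteDensity 0 x = 1 / π * √(2 - x ^ 2) := by
  rcases le_or_gt 0 (2 - x ^ 2) with h | h
  · rw [truncatedHermiteDensity, zero_pow two_ne_zero, add_zero, sub_zero, sqrt_div h,
      sqrt_sq_eq_abs]
    field_simp
  · rw [truncatedHermiteDensity, sqrt_eq_zero_of_nonpos h.le, sqrt_eq_zero_of_nonpos]
    · simp
    · exact div_nonpos_of_nonpos_of_nonneg (by simpa using h.le) (by simpa using sq_nonneg x)

theorem continuous_truncatedHermiteCDF (σ : ℝ) : Continuous (truncatedHermiteCDF σ) := by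
  unfold truncatedHermiteCDF
  fun_prop

theorem truncatedHermiteCDF_sqrt_sub (σ : ℝ) :
    truncatedHermiteCDF σ √(σ ^ 2 + 2) - truncatedHermiteCDF σ σ = 1 / 2 := by
  rw [truncatedHermiteCDF, truncatedHermiteCDF, sq_sqrt (by positivity)]
  norm_num
  field_simp
  ring

section

variable {σ : ℝ}

theorem le_sqrt_sq_add_two (hσ : 0 ≤ σ) : σ ≤ √(σ ^ 2 + 2) :=
  (le_sqrt hσ (by positivity)).2 (by linarith)

theorem hasDerivAt_truncatedHermiteCDF (hσ : 0 ≤ σ) {x : ℝ} (hx : x ∈ Ioo σ √(σ ^ 2 + 2)) :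
    HasDerivAt (truncatedHermiteCDF σ) (truncatedHermiteDensity σ x) x := by
  have hx0 : 0 < x := hσ.trans_lt hx.1
  have hx₂ : x ^ 2 < σ ^ 2 + 2 := (lt_sqrt hx0.le).1 hx.2
  have hφ : HasDerivAt (fun x => x ^ 2 - σ ^ 2 - 1) (2 * x) x := by
    simpa using ((hasDerivAt_pow 2 x).sub_const (σ ^ 2)).sub_const 1
  refine (((hasDerivAt_arcsin_add_sqrt_one_sub_sq (by nlinarith [hx.1]) (by linarith)).comp x
    hφ).div_const (2 * π)).congr_deriv ?_
  rw [truncatedHermiteDensity, abs_of_pos hx0]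
  field_simp
  ring_nf

theorem intervalIntegrable_truncatedHermiteDensity (hσ : 0 ≤ σ) :
    IntervalIntegrable (truncatedHermiteDensity σ) volume σ √(σ ^ 2 + 2) :=
  (intervalIntegrable_iff_integrableOn_Ioc_of_le (le_sqrt_sq_add_two hσ)).2 <|
    intervalIntegral.integrableOn_deriv_of_nonneg (continuous_truncatedHermiteCDF σ).continuousOn
      (fun _ hx => hasDerivAt_truncatedHermiteCDF hσ hx)
      (fun x _ => truncatedHermiteDensity_nonneg σ x)

theorem integral_truncatedHermiteDensity (hσ : 0 ≤ σ) :
    ∫ x in σ..√(σ ^ 2 + 2), truncatedHermiteDensity σ x = 1 / 2 := by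
  rw [intervalIntegral.integral_eq_sub_of_hasDerivAt_of_le (le_sqrt_sq_add_two hσ)
    (continuous_truncatedHermiteCDF σ).continuousOn
    (fun _ hx => hasDerivAt_truncatedHermiteCDF hσ hx)
    (intervalIntegrable_truncatedHermiteDensity hσ), truncatedHermiteCDF_sqrt_sub]

end

/-- For `σ ≥ 0` and `b = √(σ²+2)`, the function
`f(x) = (|x|/π)√((2+σ²-x²)/(x²-σ²))` is a probability density on
`[-b,-σ] ∪ [σ,b]`; for `σ = 0` it reduces to the semicircle law. -/
theorem truncated_symmetric_hermite_limit_density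
    (σ b : ℝ) (hσ : 0 ≤ σ) (hb : b = Real.sqrt (σ^2 + 2))
    (f : ℝ → ℝ)
    (hf : ∀ x, f x = (|x|/π) * Real.sqrt ((2 + σ^2 - x^2)/(x^2 - σ^2))) :
    (∀ x ∈ Set.Icc (-b) (-σ) ∪ Set.Icc σ b, 0 ≤ f x) ∧
    (∫ x in Set.Icc (-b) (-σ) ∪ Set.Icc σ b, f x) = 1 ∧
    (σ = 0 → ∀ x : ℝ, x ≠ 0 → f x = (1/π) * Real.sqrt (2 - x^2)) := by
  obtain rfl : f = truncatedHermiteDensity σ := funext hf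
  subst hb
  refine ⟨fun x _ => truncatedHermiteDensity_nonneg σ x, ?_,
    fun hσ₀ x hx => hσ₀ ▸ truncatedHermiteDensity_zero hx⟩
  rw [integral_Icc_neg_union_Icc_of_even (truncatedHermiteDensity_neg σ) hσ
    (le_sqrt_sq_add_two hσ) (intervalIntegrable_truncatedHermiteDensity hσ),
    integral_truncatedHermiteDensity hσ]
  norm_num
end
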